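/- Let Ω ⊂ (0,∞)×ℝ be a measurable set and Ω̂ := {(x,y,z) ∈ ℝ³ : (√(x²+y²), z) ∈ Ω} its solid of revolution. Let u = (u_r,u_z) and v = (v_r,v_z) be C¹ vector fields on (0,∞)×ℝ such that the function (r,z) ↦ r·( |∇u(r,z)|·|∇v(r,z)| + r⁻²·|u_r(r,z)|·|v_r(r,z)| ) is Lebesgue-integrable on Ω. Then ∫_{Ω̂} Dû : Dv̂ dx dy dz = 2π · ∫_Ω r·( ∇u : ∇v + r⁻² u_r v_r ) dr dz, where û, v̂ are the revolved vector fields. -/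

import Mathlib

open MeasureTheory

noncomputable section

/-- Partial derivatives of scalar functions on `ℝ²`. -/
def pdr (f : ℝ × ℝ → ℝ) (p : ℝ × ℝ) : ℝ := fderiv ℝ f p (1, 0)
def pdz (f : ℝ × ℝ → ℝ) (p : ℝ × ℝ) : ℝ := fderiv ℝ f p (0, 1)

/-- Partial derivatives of scalar functions on `ℝ³ = ℝ × ℝ × ℝ`. -/
def pdx3 (f : ℝ × ℝ × ℝ → ℝ) (q : ℝ × ℝ × ℝ) : ℝ := fderiv ℝ f q (1, 0, 0)
def pdy3 (f : ℝ × ℝ × ℝ → ℝ) (q : ℝ × ℝ × ℝ) : ℝ := fderiv ℝ f q (0, 1, 0)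
def pdz3 (f : ℝ × ℝ × ℝ → ℝ) (q : ℝ × ℝ × ℝ) : ℝ := fderiv ℝ f q (0, 0, 1)

/-- The Frobenius inner product `∇F : ∇G` of the 2×2 Jacobians of two planar fields. -/
def jdot2 (F G : ℝ × ℝ → ℝ × ℝ) (p : ℝ × ℝ) : ℝ :=
  pdr (fun s => (F s).1) p * pdr (fun s => (G s).1) p +
  pdz (fun s => (F s).1) p * pdz (fun s => (G s).1) p +
  pdr (fun s => (F s).2) p * pdr (fun s => (G s).2) p +
  pdz (fun s => (F s).2) p * pdz (fun s => (G s).2) p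

/-- The Frobenius norm `|∇F|_F` of the 2×2 Jacobian of a planar field. -/
def fnorm2 (F : ℝ × ℝ → ℝ × ℝ) (p : ℝ × ℝ) : ℝ := Real.sqrt (jdot2 F F p)

/-- The Frobenius inner product `DF : DG` of the 3×3 Jacobians of two spatial fields. -/
def jdot3 (F G : ℝ × ℝ × ℝ → ℝ × ℝ × ℝ) (q : ℝ × ℝ × ℝ) : ℝ :=
  pdx3 (fun s => (F s).1) q * pdx3 (fun s => (G s).1) q +
  pdy3 (fun s => (F s).1) q * pdy3 (fun s => (G s).1) q +
  pdz3 (fun s => (F s).1) q * pdz3 (fun s => (G s).1) q +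
  pdx3 (fun s => (F s).2.1) q * pdx3 (fun s => (G s).2.1) q +
  pdy3 (fun s => (F s).2.1) q * pdy3 (fun s => (G s).2.1) q +
  pdz3 (fun s => (F s).2.1) q * pdz3 (fun s => (G s).2.1) q +
  pdx3 (fun s => (F s).2.2) q * pdx3 (fun s => (G s).2.2) q +
  pdy3 (fun s => (F s).2.2) q * pdy3 (fun s => (G s).2.2) q +
  pdz3 (fun s => (F s).2.2) q * pdz3 (fun s => (G s).2.2) q

/-- The revolved vector field `û` on `ℝ³` associated with the meridian field `(u_r, u_z)`. -/
def revolve (ur uz : ℝ × ℝ → ℝ) (q : ℝ × ℝ × ℝ) : ℝ × ℝ × ℝ :=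
  (ur (Real.sqrt (q.1 ^ 2 + q.2.1 ^ 2), q.2.2) * q.1 / Real.sqrt (q.1 ^ 2 + q.2.1 ^ 2),
   ur (Real.sqrt (q.1 ^ 2 + q.2.1 ^ 2), q.2.2) * q.2.1 / Real.sqrt (q.1 ^ 2 + q.2.1 ^ 2),
   uz (Real.sqrt (q.1 ^ 2 + q.2.1 ^ 2), q.2.2))

/-- The solid of revolution of a meridian set `Ω ⊆ (0,∞) × ℝ`. -/
def solidRev (Ω : Set (ℝ × ℝ)) : Set (ℝ × ℝ × ℝ) :=
  {q : ℝ × ℝ × ℝ | (Real.sqrt (q.1 ^ 2 + q.2.1 ^ 2), q.2.2) ∈ Ω}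

/-!
By the chain rule, the Jacobian of `û` at a point with cylindrical coordinates `(ρ, z)` is
written in terms of `∇u`, `u_r / ρ` and the radial unit vector `(c, s) = (x / ρ, y / ρ)`;
contracting two such Jacobians and using `c² + s² = 1` gives
`Dû : Dv̂ = ∇u : ∇v + ρ⁻² u_r v_r` at `(ρ, z)`. The integrand over `Ω̂` is therefore a function
of `(ρ, z)` only, and the cylindrical change of variables `∫_{Ω̂} g(ρ, z) = 2π ∫_Ω r g(r, z)`
(polar coordinates in the `(x, y)`-plane, then integrating out the angle) concludes.
-/

open Real Set ContinuousLinearMap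

def cylRadius (q : ℝ × ℝ × ℝ) : ℝ := √(q.1 ^ 2 + q.2.1 ^ 2)

def meridianProj (q : ℝ × ℝ × ℝ) : ℝ × ℝ := (cylRadius q, q.2.2)

def fderivCylRadius (q : ℝ × ℝ × ℝ) : ℝ × ℝ × ℝ →L[ℝ] ℝ :=
  (q.1 / cylRadius q) • fst ℝ ℝ (ℝ × ℝ) +
    (q.2.1 / cylRadius q) • (fst ℝ ℝ ℝ).comp (snd ℝ ℝ (ℝ × ℝ))

theorem fderivCylRadius_apply (q v : ℝ × ℝ × ℝ) :
    fderivCylRadius q v = q.1 / cylRadius q * v.1 + q.2.1 / cylRadius q * v.2.1 :=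
  rfl

theorem fderiv_apply_eq_pdr_add_pdz (f : ℝ × ℝ → ℝ) (p : ℝ × ℝ) (a b : ℝ) :
    fderiv ℝ f p (a, b) = a * pdr f p + b * pdz f p := by
  rw [pdr, pdz, ← smul_eq_mul, ← smul_eq_mul, ← map_smul, ← map_smul, ← map_add]
  simp

section Calculus

variable {q : ℝ × ℝ × ℝ} {f : ℝ × ℝ → ℝ}

theorem hasFDerivAt_cylRadius (hq : 0 < cylRadius q) :
    HasFDerivAt cylRadius (fderivCylRadius q) q := by
  have hy : HasFDerivAt (fun w : ℝ × ℝ × ℝ => w.2.1) ((fst ℝ ℝ ℝ).comp (snd ℝ ℝ (ℝ × ℝ))) q :=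
    hasFDerivAt_fst.comp q hasFDerivAt_snd
  refine (((hasFDerivAt_fst.pow 2).add (hy.pow 2)).sqrt (Real.sqrt_pos.1 hq).ne').congr_fderiv ?_
  ext <;> simp [fderivCylRadius, cylRadius] <;> field_simp

theorem hasFDerivAt_meridianProj (hq : 0 < cylRadius q) :
    HasFDerivAt meridianProj
      ((fderivCylRadius q).prod ((snd ℝ ℝ ℝ).comp (snd ℝ ℝ (ℝ × ℝ)))) q :=
  (hasFDerivAt_cylRadius hq).prodMk (hasFDerivAt_snd.comp q hasFDerivAt_snd)

theorem fderiv_comp_meridianProj_apply (hq : 0 < cylRadius q)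
    (hf : DifferentiableAt ℝ f (meridianProj q)) (v : ℝ × ℝ × ℝ) :
    fderiv ℝ (fun w => f (meridianProj w)) q v =
      fderivCylRadius q v * pdr f (meridianProj q) + v.2.2 * pdz f (meridianProj q) := by
  have h : HasFDerivAt (fun w => f (meridianProj w)) _ q :=
    hf.hasFDerivAt.comp q (hasFDerivAt_meridianProj hq)
  rw [h.fderiv, comp_apply, prod_apply, fderiv_apply_eq_pdr_add_pdz]
  rfl

theorem fderiv_mul_div_cylRadius_apply (hq : 0 < cylRadius q)
    (hf : DifferentiableAt ℝ f (meridianProj q)) (ℓ : ℝ × ℝ × ℝ →L[ℝ] ℝ) (v : ℝ × ℝ × ℝ) :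
    fderiv ℝ (fun w => f (meridianProj w) * ℓ w / cylRadius w) q v =
      fderiv ℝ (fun w => f (meridianProj w)) q v * (ℓ q / cylRadius q) +
        f (meridianProj q) * (ℓ v - ℓ q / cylRadius q * fderivCylRadius q v) / cylRadius q := by
  have hinv := (hasDerivAt_inv hq.ne').comp_hasFDerivAt q (hasFDerivAt_cylRadius hq)
  have hfm : HasFDerivAt (fun w => f (meridianProj w)) _ q :=
    hf.hasFDerivAt.comp q (hasFDerivAt_meridianProj hq)
  have h : HasFDerivAt (fun w => f (meridianProj w) * ℓ w / cylRadius w) _ q :=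
    (hfm.mul ℓ.hasFDerivAt).mul hinv
  rw [h.fderiv, ← hfm.fderiv]
  simp only [Pi.mul_apply, neg_smul, smul_neg, smul_add, add_apply, neg_apply, smul_apply,
    smul_eq_mul]
  ring

theorem fderiv_revolve_fst_apply (hq : 0 < cylRadius q)
    (hf : DifferentiableAt ℝ f (meridianProj q)) (g : ℝ × ℝ → ℝ) (v : ℝ × ℝ × ℝ) :
    fderiv ℝ (fun w => (revolve f g w).1) q v =
      fderiv ℝ (fun w => f (meridianProj w)) q v * (q.1 / cylRadius q) +
        f (meridianProj q) * (v.1 - q.1 / cylRadius q * fderivCylRadius q v) / cylRadius q :=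
  fderiv_mul_div_cylRadius_apply hq hf (fst ℝ ℝ (ℝ × ℝ)) v

theorem fderiv_revolve_snd_fst_apply (hq : 0 < cylRadius q)
    (hf : DifferentiableAt ℝ f (meridianProj q)) (g : ℝ × ℝ → ℝ) (v : ℝ × ℝ × ℝ) :
    fderiv ℝ (fun w => (revolve f g w).2.1) q v =
      fderiv ℝ (fun w => f (meridianProj w)) q v * (q.2.1 / cylRadius q) +
        f (meridianProj q) * (v.2.1 - q.2.1 / cylRadius q * fderivCylRadius q v) / cylRadius q :=
  fderiv_mul_div_cylRadius_apply hq hf ((fst ℝ ℝ ℝ).comp (snd ℝ ℝ (ℝ × ℝ))) v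

theorem fderiv_revolve_snd_snd_apply (hq : 0 < cylRadius q) (f : ℝ × ℝ → ℝ) {g : ℝ × ℝ → ℝ}
    (hg : DifferentiableAt ℝ g (meridianProj q)) (v : ℝ × ℝ × ℝ) :
    fderiv ℝ (fun w => (revolve f g w).2.2) q v =
      fderivCylRadius q v * pdr g (meridianProj q) + v.2.2 * pdz g (meridianProj q) :=
  fderiv_comp_meridianProj_apply hq hg v

theorem jdot3_revolve (hq : 0 < cylRadius q) {ur uz vr vz : ℝ × ℝ → ℝ}
    (hur : DifferentiableAt ℝ ur (meridianProj q)) (huz : DifferentiableAt ℝ uz (meridianProj q))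
    (hvr : DifferentiableAt ℝ vr (meridianProj q)) (hvz : DifferentiableAt ℝ vz (meridianProj q)) :
    jdot3 (revolve ur uz) (revolve vr vz) q =
      jdot2 (fun s => (ur s, uz s)) (fun s => (vr s, vz s)) (meridianProj q) +
        (cylRadius q ^ 2)⁻¹ * (ur (meridianProj q) * vr (meridianProj q)) := by
  simp only [jdot3, jdot2, pdx3, pdy3, pdz3, fderiv_revolve_fst_apply hq hur,
    fderiv_revolve_snd_fst_apply hq hur, fderiv_revolve_snd_snd_apply hq ur huz,
    fderiv_revolve_fst_apply hq hvr, fderiv_revolve_snd_fst_apply hq hvr,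
    fderiv_revolve_snd_snd_apply hq vr hvz, fderiv_comp_meridianProj_apply hq hur,
    fderiv_comp_meridianProj_apply hq hvr, fderivCylRadius_apply]
  have hcs : (q.1 / cylRadius q) ^ 2 + (q.2.1 / cylRadius q) ^ 2 = 1 := by
    rw [div_pow, div_pow, ← add_div, cylRadius, Real.sq_sqrt (by positivity),
      div_self (Real.sqrt_pos.1 hq).ne']
  set c := q.1 / cylRadius q
  set s := q.2.1 / cylRadius q
  set p := meridianProj q
  -- The difference of the two sides is a polynomial in `c², s²` vanishing on `c² + s² = 1`.
  linear_combination (pdr ur p * pdr vr p * (c ^ 2 + s ^ 2 + 1) + pdz ur p * pdz vr p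
    + pdr uz p * pdr vz p
    - (c ^ 2 + s ^ 2) * (pdr ur p * vr p + ur p * pdr vr p) / cylRadius q
    + ur p * vr p / cylRadius q ^ 2 * (c ^ 2 + s ^ 2 - 1)) * hcs

end Calculus

section Integration

open MeasurableEquiv in
def prodRightComm (α β γ : Type*) [MeasurableSpace α] [MeasurableSpace β] [MeasurableSpace γ] :
    (α × β) × γ ≃ᵐ (α × γ) × β :=
  (prodAssoc.trans ((refl α).prodCongr prodComm)).trans prodAssoc.symm

@[simp]
theorem prodRightComm_apply {α β γ : Type*} [MeasurableSpace α] [MeasurableSpace β]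
    [MeasurableSpace γ] (x : (α × β) × γ) : prodRightComm α β γ x = ((x.1.1, x.2), x.1.2) :=
  rfl

theorem measurePreserving_prodRightComm {α β γ : Type*} [MeasurableSpace α] [MeasurableSpace β]
    [MeasurableSpace γ] (μ : Measure α) (ν : Measure β) (ξ : Measure γ) [SFinite μ] [SFinite ν]
    [SFinite ξ] :
    MeasurePreserving (prodRightComm α β γ) ((μ.prod ν).prod ξ) ((μ.prod ξ).prod ν) :=
  (measurePreserving_prodAssoc μ ξ ν).symm.comp
    (((MeasurePreserving.id μ).prod (Measure.measurePreserving_swap (μ := ν) (ν := ξ))).comp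
      (measurePreserving_prodAssoc μ ν ξ))

-- Instance search does not see through `volume = volume.prod volume` on this product.
instance : Measure.IsAddHaarMeasure (volume : Measure ((ℝ × ℝ) × ℝ)) :=
  Measure.prod.instIsAddHaarMeasure _ _

theorem integral_comp_polarCoord_prod_symm {E : Type*} [NormedAddCommGroup E] [NormedSpace ℝ E]
    (f : (ℝ × ℝ) × ℝ → E) :
    ∫ x in polarCoord.target ×ˢ univ, x.1.1 • f (polarCoord.symm x.1, x.2) = ∫ x, f x := by
  let P := polarCoord.prod (OpenPartialHomeomorph.refl ℝ)
  have hP : ∀ x, HasFDerivAt P.symm ((fderivPolarCoordSymm x.1).prodMap (.id ℝ ℝ)) x :=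
    fun x => (hasFDerivAt_polarCoord_symm x.1).prodMap x (hasFDerivAt_id x.2)
  have hsource : P.symm '' P.target =ᵐ[volume] univ := by
    rw [P.symm_image_target_eq_source, ← univ_prod_univ, Measure.volume_eq_prod]
    exact Measure.set_prod_ae_eq polarCoord_source_ae_eq_univ .rfl
  rw [← setIntegral_univ (f := f), ← setIntegral_congr_set hsource,
    integral_image_eq_integral_abs_det_fderiv_smul volume P.open_target.measurableSet
      (fun x _ => (hP x).hasFDerivWithinAt) P.symm.injOn f]
  refine setIntegral_congr_fun P.open_target.measurableSet fun x hx => ?_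
  have hdet : ((fderivPolarCoordSymm x.1).prodMap (.id ℝ ℝ)).det = x.1.1 := by
    rw [ContinuousLinearMap.det, ContinuousLinearMap.coe_prodMap, LinearMap.det_prodMap,
      ContinuousLinearMap.coe_id, LinearMap.det_id, mul_one, ← ContinuousLinearMap.det,
      det_fderivPolarCoordSymm]
  rw [hdet, abs_of_pos hx.1.1]
  rfl

theorem cylRadius_cos_sin {r : ℝ} (hr : 0 ≤ r) (θ z : ℝ) :
    cylRadius (r * cos θ, r * sin θ, z) = r := by
  rw [cylRadius, mul_pow, mul_pow, ← mul_add, cos_sq_add_sin_sq, mul_one, Real.sqrt_sq hr]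

theorem integral_comp_meridianProj (g : ℝ × ℝ → ℝ) :
    ∫ q, g (meridianProj q) = 2 * π * ∫ p in Ioi 0 ×ˢ univ, p.1 * g p := by
  have hswap : prodRightComm ℝ ℝ ℝ ⁻¹' ((Ioi 0 ×ˢ univ) ×ˢ Ioo (-π) π) =
      polarCoord.target ×ˢ univ := by
    ext; simp [polarCoord_target]
  have hmp : MeasurePreserving (prodRightComm ℝ ℝ ℝ) volume volume :=
    measurePreserving_prodRightComm volume volume volume
  calc ∫ q, g (meridianProj q)
      = ∫ x : (ℝ × ℝ) × ℝ, g (meridianProj (MeasurableEquiv.prodAssoc x)) :=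
        (volume_preserving_prodAssoc.integral_comp' _).symm
    _ = ∫ x in polarCoord.target ×ˢ univ,
          x.1.1 • g (meridianProj (MeasurableEquiv.prodAssoc (polarCoord.symm x.1, x.2))) :=
        (integral_comp_polarCoord_prod_symm _).symm
    _ = ∫ x in polarCoord.target ×ˢ univ, x.1.1 * g (x.1.1, x.2) := by
        refine setIntegral_congr_fun (polarCoord.open_target.prod isOpen_univ).measurableSet
          fun x hx => ?_
        change x.1.1 • g (meridianProj (x.1.1 * cos x.1.2, x.1.1 * sin x.1.2, x.2)) = _
        rw [meridianProj, cylRadius_cos_sin hx.1.1.le, smul_eq_mul]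
    _ = ∫ y in (Ioi 0 ×ˢ univ) ×ˢ Ioo (-π) π, y.1.1 * g y.1 := by
        rw [← hswap, ← hmp.setIntegral_preimage_emb (MeasurableEquiv.measurableEmbedding _)]
        rfl
    _ = 2 * π * ∫ p in Ioi 0 ×ˢ univ, p.1 * g p := by
        rw [Measure.volume_eq_prod, ← Measure.prod_restrict, integral_fun_fst (fun p => p.1 * g p),
          measureReal_restrict_apply_univ, Real.volume_real_Ioo_of_le (by linarith [pi_pos]),
          smul_eq_mul]
        ring

theorem measurable_meridianProj : Measurable meridianProj := by
  unfold meridianProj cylRadius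
  fun_prop

theorem setIntegral_comp_meridianProj {Ω : Set (ℝ × ℝ)} (hΩm : MeasurableSet Ω)
    (hΩ : Ω ⊆ {p | 0 < p.1}) (g : ℝ × ℝ → ℝ) :
    ∫ q in meridianProj ⁻¹' Ω, g (meridianProj q) = 2 * π * ∫ p in Ω, p.1 * g p := by
  have hind : (meridianProj ⁻¹' Ω).indicator (fun q => g (meridianProj q)) =
      fun q => Ω.indicator g (meridianProj q) :=
    funext fun _ => indicator_comp_right meridianProj
  have hsub : Ω ⊆ Ioi 0 ×ˢ univ := fun p hp => ⟨hΩ hp, mem_univ _⟩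
  rw [← integral_indicator (measurable_meridianProj hΩm), hind, integral_comp_meridianProj]
  simp_rw [← indicator_mul_right]
  rw [integral_indicator hΩm, Measure.restrict_restrict hΩm, inter_eq_left.2 hsub]

end Integration

theorem integral_jacobian_frobenius_revolved_general
    (Ω : Set (ℝ × ℝ)) (hΩm : MeasurableSet Ω) (hΩ : Ω ⊆ {p : ℝ × ℝ | 0 < p.1})
    (ur uz vr vz : ℝ × ℝ → ℝ)
    (hu : ContDiffOn ℝ 1 (fun p => (ur p, uz p)) {p : ℝ × ℝ | 0 < p.1})
    (hv : ContDiffOn ℝ 1 (fun p => (vr p, vz p)) {p : ℝ × ℝ | 0 < p.1}) :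
    ∫ q in solidRev Ω, jdot3 (revolve ur uz) (revolve vr vz) q
      = (2 * Real.pi) *
        ∫ p in Ω, p.1 * (jdot2 (fun s => (ur s, uz s)) (fun s => (vr s, vz s)) p
          + (p.1 ^ 2)⁻¹ * (ur p * vr p)) := by
  have hdiff {f g : ℝ × ℝ → ℝ} (h : ContDiffOn ℝ 1 (fun p => (f p, g p)) {p | 0 < p.1})
      {p : ℝ × ℝ} (hp : p ∈ Ω) : DifferentiableAt ℝ f p ∧ DifferentiableAt ℝ g p :=
    have h' := (h.contDiffAt ((isOpen_lt continuous_const continuous_fst).mem_nhds (hΩ hp)))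
      |>.differentiableAt one_ne_zero
    ⟨h'.fst, h'.snd⟩
  rw [← setIntegral_comp_meridianProj hΩm hΩ]
  refine setIntegral_congr_fun (measurable_meridianProj hΩm) fun q hq => ?_
  exact jdot3_revolve (hΩ hq) (hdiff hu hq).1 (hdiff hu hq).2 (hdiff hv hq).1 (hdiff hv hq).2

/-- `∫_{Ω̂} Dû : Dv̂ = 2π ∫_Ω r (∇u : ∇v + r⁻² u_r v_r)`. -/
theorem integral_jacobian_frobenius_revolved
    (Ω : Set (ℝ × ℝ)) (hΩm : MeasurableSet Ω) (hΩ : Ω ⊆ {p : ℝ × ℝ | 0 < p.1})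
    (ur uz vr vz : ℝ × ℝ → ℝ)
    (hu : ContDiffOn ℝ 1 (fun p => (ur p, uz p)) {p : ℝ × ℝ | 0 < p.1})
    (hv : ContDiffOn ℝ 1 (fun p => (vr p, vz p)) {p : ℝ × ℝ | 0 < p.1})
    (hint : IntegrableOn
      (fun p : ℝ × ℝ => p.1 *
        (fnorm2 (fun s => (ur s, uz s)) p * fnorm2 (fun s => (vr s, vz s)) p
          + (p.1 ^ 2)⁻¹ * (|ur p| * |vr p|))) Ω volume) :
    ∫ q in solidRev Ω, jdot3 (revolve ur uz) (revolve vr vz) q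
      = (2 * Real.pi) *
        ∫ p in Ω, p.1 * (jdot2 (fun s => (ur s, uz s)) (fun s => (vr s, vz s)) p
          + (p.1 ^ 2)⁻¹ * (ur p * vr p)) :=
  integral_jacobian_frobenius_revolved_general Ω hΩm hΩ ur uz vr vz hu hv
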